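/- arXiv:2601.06782 — 3 statements merged into one kernel-verified Lean document; each statement's English description precedes it below -/
import Mathlib

section
/- Let λ₂ > 0 and y ∈ ℝⁿ. The Fenchel conjugate of s(x) = (λ₂/2)‖x‖² + ι_{x ⪰ 1}(x) (where ι is the indicator taking value ∞ unless every coordinate of x is at least 1), evaluated at y, equals (1/(2λ₂))‖y‖² − (1/(2λ₂))‖γ‖², where γᵢ = max(λ₂ − yᵢ, 0); moreover the supremum defining the conjugate is attained at x*ᵢ = max(1, yᵢ/λ₂). -/
lemma key_eq (lam y : ℝ) (hlam : 0 < lam) :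
    y * max 1 (y / lam) - lam / 2 * (max 1 (y / lam)) ^ 2
      = (1 / (2 * lam)) * y ^ 2 - (1 / (2 * lam)) * (max (lam - y) 0) ^ 2 := by
  rcases le_total (y / lam) 1 with h | h
  · rw [max_eq_left h, max_eq_left (by nlinarith [(div_le_one hlam).mp h])]
    field_simp
    ring
  · rw [max_eq_right h, max_eq_right (by nlinarith [(one_le_div hlam).mp h])]
    field_simp
    ring

lemma key_le (lam y x : ℝ) (hlam : 0 < lam) (hx : 1 ≤ x) :
    y * x - lam / 2 * x ^ 2
      ≤ (1 / (2 * lam)) * y ^ 2 - (1 / (2 * lam)) * (max (lam - y) 0) ^ 2 := by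
  rw [← key_eq lam y hlam]
  set z := max 1 (y / lam) with hz
  have h1 : 1 ≤ z := le_max_left _ _
  -- f(z) - f(x) = (z-x)(y - lam z) + lam/2 (z-x)^2 ≥ 0
  rcases le_total (y / lam) 1 with h | h
  · have hz1 : z = 1 := max_eq_left h
    have hy : y ≤ lam := by nlinarith [(div_le_one hlam).mp h]
    rw [hz1]
    nlinarith [sq_nonneg (x - 1), mul_nonneg (sub_nonneg.mpr hx) (sub_nonneg.mpr hy)]
  · have hz2 : z = y / lam := max_eq_right h
    have hzy : lam * z = y := by rw [hz2]; field_simp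
    nlinarith [sq_nonneg (z - x), hzy]

/-- the Fenchel conjugate of
`s(x) = (λ₂/2)‖x‖² + ι_{x ⪰ 1}(x)` at `y` is
`(1/(2λ₂))‖y‖² − (1/(2λ₂))‖γ‖²` with `γᵢ = max(λ₂ − yᵢ, 0)`, and the supremum
defining the conjugate is attained at `x*ᵢ = max(1, yᵢ/λ₂)`. -/
theorem stmt_0 (n : ℕ) (lam : ℝ) (hlam : 0 < lam) (y : Fin n → ℝ)
    (xstar : Fin n → ℝ) (hxstar : ∀ i, xstar i = max 1 (y i / lam))
    (γ : Fin n → ℝ) (hγ : ∀ i, γ i = max (lam - y i) 0) :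
    (∀ i, 1 ≤ xstar i) ∧
    (∑ i, y i * xstar i - lam / 2 * ∑ i, xstar i ^ 2
        = (1 / (2 * lam)) * ∑ i, y i ^ 2 - (1 / (2 * lam)) * ∑ i, γ i ^ 2) ∧
    (∀ x : Fin n → ℝ, (∀ i, 1 ≤ x i) →
      ∑ i, y i * x i - lam / 2 * ∑ i, x i ^ 2 ≤
        (1 / (2 * lam)) * ∑ i, y i ^ 2 - (1 / (2 * lam)) * ∑ i, γ i ^ 2) := by
  refine ⟨fun i => by rw [hxstar i]; exact le_max_left _ _, ?_, ?_⟩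
  · rw [Finset.mul_sum, Finset.mul_sum, Finset.mul_sum, ← Finset.sum_sub_distrib,
      ← Finset.sum_sub_distrib]
    exact Finset.sum_congr rfl fun i _ => by rw [hxstar i, hγ i]; exact key_eq lam (y i) hlam
  · intro x hx
    rw [Finset.mul_sum, Finset.mul_sum, Finset.mul_sum, ← Finset.sum_sub_distrib,
      ← Finset.sum_sub_distrib]
    exact Finset.sum_le_sum fun i _ => by rw [hγ i]; exact key_le lam (y i) (x i) hlam (hx i)
end

section
/- For the hinge loss φ(α) = max(0, 1 − α) and η₁, η₂ ≥ 0, the generic conditional risk q_{η₁,η₂}(α) = η₁ φ(α) + η₂ φ(−α) satisfies q_{η₁,η₂}(0) − min_{α∈ℝ} q_{η₁,η₂}(α) = |η₁ − η₂|. -/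
/-- for the hinge loss, the generic conditional risk
`q(α) = η₁ max(0,1−α) + η₂ max(0,1+α)` has a minimum over `ℝ`, and
`q(0) − min q = |η₁ − η₂|`. -/
theorem stmt_11 (η₁ η₂ : ℝ) (hη₁ : 0 ≤ η₁) (hη₂ : 0 ≤ η₂)
    (q : ℝ → ℝ)
    (hq : ∀ α, q α = η₁ * max 0 (1 - α) + η₂ * max 0 (1 + α)) :
    IsLeast (Set.range q) (q 0 - |η₁ - η₂|) := by
  have hq0 : q 0 = η₁ + η₂ := by rw [hq]; norm_num
  have hval : q 0 - |η₁ - η₂| = 2 * min η₁ η₂ := by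
    rcases le_total η₁ η₂ with h | h
    · rw [abs_of_nonpos (by linarith), min_eq_left h, hq0]; ring
    · rw [abs_of_nonneg (by linarith), min_eq_right h, hq0]; ring
  rw [hval]
  constructor
  · rcases le_total η₁ η₂ with h | h
    · exact ⟨-1, by rw [hq, min_eq_left h]; norm_num; ring⟩
    · exact ⟨1, by rw [hq, min_eq_right h]; norm_num; ring⟩
  · rintro x ⟨α, rfl⟩
    rw [hq]
    have h1 : max 0 (1 - α) + max 0 (1 + α) ≥ 2 := by
      rcases le_total 0 (1 - α) with h | h <;> rcases le_total 0 (1 + α) with h' | h' <;>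
        simp [max_eq_left, max_eq_right, *] <;> linarith
    have hm₁ : min η₁ η₂ ≤ η₁ := min_le_left _ _
    have hm₂ : min η₁ η₂ ≤ η₂ := min_le_right _ _
    have hmn : 0 ≤ min η₁ η₂ := le_min hη₁ hη₂
    nlinarith [mul_le_mul_of_nonneg_right hm₁ (le_max_left 0 (1 - α) : (0:ℝ) ≤ max 0 (1 - α)),
      mul_le_mul_of_nonneg_right hm₂ (le_max_left 0 (1 + α) : (0:ℝ) ≤ max 0 (1 + α))]
end

section
/- Let H be an RKHS on 𝒳 with measurable bounded kernel K, and C_{XX} the covariance operator defined by (C_{XX} f)(x) = ∫ K(x,x') f(x') dP_X(x'). Suppose E[Z | X = ·] ∈ H and E[K(X,X)] < ∞, E[Z²] < ∞. Then for every x ∈ 𝒳, ⟨C_{XX} E[Z|X=·], K(·,x)⟩_H = ⟨E[K(·,X)Z], K(·,x)⟩_H, i.e., C_{XX} (E[Z|X=·]) = E[K(·,X) Z] as elements of H. -/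
open MeasureTheory
open scoped RealInnerProductSpace

/-- covariance-operator identity
`C_{XX}(E[Z|X=·]) = E[K(·,X) Z]` in the RKHS `H`.  The RKHS is described by its
feature map `k : 𝒳 → H` (with `k x = K(·,x)`, `K(x,x') = ⟪k x, k x'⟫` and
evaluation `f(x) = ⟪f, k x⟫`); `C_{XX} f = ∫ ⟪f, k x'⟫ • k x' dP_X(x')`; the
element `e ∈ H` represents the conditional mean function `E[Z|X=·]`. -/
theorem stmt_17 {𝒳 : Type*} [MeasurableSpace 𝒳]
    {H : Type*} [NormedAddCommGroup H] [InnerProductSpace ℝ H]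
    [CompleteSpace H] [MeasurableSpace H] [BorelSpace H] [SecondCountableTopology H]
    {Ω : Type*} [MeasurableSpace Ω] (P : Measure Ω) [IsProbabilityMeasure P]
    (X : Ω → 𝒳) (hX : Measurable X) (Z : Ω → ℝ) (hZ : Measurable Z)
    (k : 𝒳 → H) (hk : Measurable k)
    (hKint : Integrable (fun ω => ⟪k (X ω), k (X ω)⟫) P)
    (hZ2 : Integrable (fun ω => (Z ω) ^ 2) P)
    (hZkint : Integrable (fun ω => Z ω • k (X ω)) P)
    (e : H)
    (he : (fun ω => ⟪e, k (X ω)⟫)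
        =ᵐ[P] P[Z | MeasurableSpace.comap X inferInstance])
    (CXX : H → H)
    (hC : ∀ f : H, CXX f = ∫ x, ⟪f, k x⟫ • k x ∂(Measure.map X P)) :
    CXX e = ∫ ω, Z ω • k (X ω) ∂P ∧
    ∀ x : 𝒳, ⟪CXX e, k x⟫ = ⟪∫ ω, Z ω • k (X ω) ∂P, k x⟫ := by
  classical
  have hm : MeasurableSpace.comap X inferInstance ≤
      (inferInstance : MeasurableSpace Ω) := hX.comap_le
  have hkX : Measurable fun ω => k (X ω) := hk.comp hX
  -- integrability of the conditional-mean integrand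
  have hint1 : Integrable (fun ω => ⟪e, k (X ω)⟫ • k (X ω)) P := by
    refine Integrable.mono' (hKint.const_mul ‖e‖)
      ((measurable_const.inner hkX).smul hkX).aestronglyMeasurable ?_
    filter_upwards with ω
    rw [norm_smul, real_inner_self_eq_norm_mul_norm]
    calc ‖⟪e, k (X ω)⟫‖ * ‖k (X ω)‖
        ≤ ‖e‖ * ‖k (X ω)‖ * ‖k (X ω)‖ :=
          mul_le_mul_of_nonneg_right (norm_inner_le_norm _ _) (norm_nonneg _)
      _ = ‖e‖ * (‖k (X ω)‖ * ‖k (X ω)‖) := by ring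
  -- Z is in L² hence integrable
  have hZmem : MemLp Z 2 P :=
    (memLp_two_iff_integrable_sq hZ.aestronglyMeasurable).2 hZ2
  have hZint : Integrable Z P := hZmem.integrable one_le_two
  -- scalar key identity
  have key_scalar : ∀ v : H,
      ∫ ω, ⟪e, k (X ω)⟫ * ⟪v, k (X ω)⟫ ∂P = ∫ ω, Z ω * ⟪v, k (X ω)⟫ ∂P := by
    intro v
    set g : Ω → ℝ := fun ω => ⟪v, k (X ω)⟫ with hg_def
    have hgM : Measurable g := measurable_const.inner hkX
    have hXm : @Measurable Ω 𝒳 (MeasurableSpace.comap X inferInstance) _ X :=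
      fun s hs => ⟨s, hs, rfl⟩
    have hg_sm : StronglyMeasurable[MeasurableSpace.comap X inferInstance] g :=
      ((measurable_const.inner hk).comp hXm).stronglyMeasurable
    have hgmem : MemLp g 2 P := by
      refine (memLp_two_iff_integrable_sq (μ := P) hgM.aestronglyMeasurable).2 ?_
      refine Integrable.mono' (hKint.const_mul (‖v‖ ^ 2))
        ((hgM.pow_const 2).aestronglyMeasurable) ?_
      filter_upwards with ω
      rw [real_inner_self_eq_norm_mul_norm]
      have h1 : |g ω| ≤ ‖v‖ * ‖k (X ω)‖ := by
        simpa using norm_inner_le_norm (𝕜 := ℝ) v (k (X ω))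
      calc ‖g ω ^ 2‖ = |g ω| * |g ω| := by
            rw [Real.norm_eq_abs, abs_pow]; ring
        _ ≤ (‖v‖ * ‖k (X ω)‖) * (‖v‖ * ‖k (X ω)‖) :=
            mul_le_mul h1 h1 (abs_nonneg _) (by positivity)
        _ = ‖v‖ ^ 2 * (‖k (X ω)‖ * ‖k (X ω)‖) := by ring
    have hgZ : Integrable (g * Z) P := by
      have := hZmem.smul (φ := g) (r := 1) hgmem
      rw [memLp_one_iff_integrable] at this
      exact this
    have hpull : P[g * Z|MeasurableSpace.comap X inferInstance] =ᵐ[P] g * P[Z|MeasurableSpace.comap X inferInstance] :=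
      condExp_mul_of_stronglyMeasurable_left hg_sm hgZ hZint
    have h1 : ∫ ω, ⟪e, k (X ω)⟫ * g ω ∂P = ∫ ω, g ω * (P[Z|MeasurableSpace.comap X inferInstance]) ω ∂P := by
      refine integral_congr_ae ?_
      filter_upwards [he] with ω hω
      rw [hω, mul_comm]
    have h2 : ∫ ω, g ω * (P[Z|MeasurableSpace.comap X inferInstance]) ω ∂P = ∫ ω, (P[g * Z|MeasurableSpace.comap X inferInstance]) ω ∂P :=
      (integral_congr_ae hpull).symm
    have h3 : ∫ ω, (P[g * Z|MeasurableSpace.comap X inferInstance]) ω ∂P = ∫ ω, (g * Z) ω ∂P := integral_condExp hm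
    rw [h1, h2, h3]
    refine integral_congr_ae ?_
    filter_upwards with ω
    simp [g, mul_comm]
  -- main identity in H
  have key : (∫ ω, ⟪e, k (X ω)⟫ • k (X ω) ∂P) = ∫ ω, Z ω • k (X ω) ∂P := by
    refine ext_inner_right ℝ fun v => ?_
    have h1 := integral_inner (𝕜 := ℝ) hint1 v
    have h2 := integral_inner (𝕜 := ℝ) hZkint v
    simp_rw [inner_smul_right] at h1 h2
    have h3 : ⟪v, (∫ ω, ⟪e, k (X ω)⟫ • k (X ω) ∂P)⟫
        = ⟪v, ∫ ω, Z ω • k (X ω) ∂P⟫ := by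
      rw [← h1, ← h2]
      exact key_scalar v
    rw [real_inner_comm, h3, real_inner_comm]
  have hmap : CXX e = ∫ ω, ⟪e, k (X ω)⟫ • k (X ω) ∂P := by
    rw [hC e]
    exact integral_map hX.aemeasurable
      ((measurable_const.inner hk).smul hk).aestronglyMeasurable
  have hmain : CXX e = ∫ ω, Z ω • k (X ω) ∂P := hmap.trans key
  exact ⟨hmain, fun x => by rw [hmain]⟩
end
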